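/- arXiv:cond-mat/0102181 — 3 statements merged into one kernel-verified Lean document; each statement's English description precedes it below -/
import Mathlib

section
/- With the boundary convention ΔH(0) := log₂|A|, so that Δ²H(1) := H(1) - log₂|A| and Δ²H(L) = H(L) - 2H(L-1) + H(L-2) for L ≥ 2, the series defining the total predictability G := Σ_{L=1}^∞ Δ²H(L) converges and its magnitude equals the redundancy: G = -(log₂|A| - h_μ), i.e. G = h_μ - log₂|A|. -/
/-!
The partial sums of the second differences telescope: `∑_{L ≤ N} Δ²H(L) = ΔH(N) - log₂|A|`,
where `ΔH(N) = H(N) - H(N-1)`. Stationarity makes `H` concave, `H(L+2) + H(L) ≤ 2 H(L+1)`: this is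
Gibbs' inequality between the law of `(L+2)`-words and its Markov approximation
`μ[init w] μ[tail w] / μ[middle w]`, whose two marginals are the `(L+1)`-word law. Hence `ΔH` is
nonincreasing, and a nonincreasing sequence whose Cesàro means `H(N)/N` converge has the same
limit `h_μ`.
-/

open MeasureTheory Real Filter

/-- The probability of the cylinder set of sequences beginning with the word `w`. -/
noncomputable def cylP {A : Type*} [MeasurableSpace A] (μ : Measure (ℕ → A)) {L : ℕ}
    (w : Fin L → A) : ℝ :=
  (μ {x : ℕ → A | ∀ i : Fin L, x i.1 = w i}).toReal

/-- The block entropy `H(L)` in bits, with the convention `0 · log₂ 0 = 0`;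
terms with `cylP μ w = 0` contribute `0` to the sum. -/
noncomputable def blockH {A : Type*} [MeasurableSpace A] [Fintype A]
    (μ : Measure (ℕ → A)) (L : ℕ) : ℝ :=
  -∑ w : Fin L → A, cylP μ w * Real.logb 2 (cylP μ w)

/-- The left shift on one-sided sequences. -/
def shift {A : Type*} : (ℕ → A) → (ℕ → A) := fun x n => x (n + 1)

/-- The second difference `Δ²H(L)` of the block entropy, with the boundary
convention `ΔH(0) := log₂|A|`, so that `Δ²H(1) = H(1) - log₂|A|` and
`Δ²H(L) = H(L) - 2H(L-1) + H(L-2)` for `L ≥ 2`. -/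
noncomputable def d2H {A : Type*} [MeasurableSpace A] [Fintype A]
    (μ : Measure (ℕ → A)) : ℕ → ℝ := fun L =>
  if L = 1 then blockH μ 1 - Real.logb 2 (Fintype.card A)
  else blockH μ L - 2 * blockH μ (L - 1) + blockH μ (L - 2)

open Topology

namespace Real

/-- Gibbs' inequality `p log (q / p) ≤ q - p` at the Markov approximation `q = f t / m` of the
probability `p` of a word with prefix probability `f`, suffix probability `t` and middle
probability `m`. -/
theorem mul_log_ssa_le {p f t m : ℝ} (hp : 0 ≤ p) (hpf : p ≤ f) (hpt : p ≤ t) (htm : t ≤ m) :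
    p * (log f + log t - log m - log p) ≤ f * t / m - p := by
  rcases hp.eq_or_lt with rfl | hp
  · simpa using div_nonneg (mul_nonneg hpf hpt) (hpt.trans htm)
  have hf : 0 < f := hp.trans_le hpf
  have ht : 0 < t := hp.trans_le hpt
  have hm : 0 < m := ht.trans_le htm
  have hlog : log f + log t - log m - log p = log (f * t / m / p) := by
    rw [log_div (by positivity) hp.ne', log_div (by positivity) hm.ne', log_mul hf.ne' ht.ne']
  calc p * (log f + log t - log m - log p) ≤ p * (f * t / m / p - 1) := by
        rw [hlog]; gcongr; exact log_le_sub_one_of_pos (by positivity)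
    _ = f * t / m - p := by field_simp

end Real

/-- The increment at `n` lies between the mean increment over `[n, 2n)` and the one over
`[0, n]`, and both means tend to `h`. -/
theorem tendsto_sub_of_antitone_sub_of_tendsto_div {f : ℕ → ℝ} {h : ℝ}
    (hanti : Antitone fun n => f (n + 1) - f n)
    (hlim : Tendsto (fun n : ℕ => f n / n) atTop (𝓝 h)) :
    Tendsto (fun n => f (n + 1) - f n) atTop (𝓝 h) := by
  have upper (n : ℕ) : f (n + 1) - f n ≤ f (n + 1) / (n + 1 : ℕ) - f 0 / (n + 1 : ℕ) := by
    have := Finset.card_nsmul_le_sum (Finset.range (n + 1)) (fun k => f (k + 1) - f k) _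
      fun k hk => hanti (Finset.mem_range_succ_iff.1 hk)
    rw [Finset.sum_range_sub, Finset.card_range, nsmul_eq_mul] at this
    rw [← sub_div, le_div_iff₀ (by positivity)]
    linarith
  have lower (n : ℕ) (hn : 1 ≤ n) :
      2 * (f (2 * n) / (2 * n : ℕ)) - f n / n ≤ f (n + 1) - f n := by
    have := Finset.sum_le_card_nsmul (Finset.Ico n (2 * n)) (fun k => f (k + 1) - f k) _
      fun k hk => hanti (Finset.mem_Ico.1 hk).1
    rw [Finset.sum_Ico_eq_sub _ (by omega), Finset.sum_range_sub, Finset.sum_range_sub,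
      Nat.card_Ico, nsmul_eq_mul, show 2 * n - n = n by omega] at this
    have hn : (0 : ℝ) < n := by exact_mod_cast hn
    rw [Nat.cast_mul, Nat.cast_two, mul_div_assoc', mul_div_mul_left _ _ two_ne_zero, ← sub_div,
      div_le_iff₀ hn]
    linarith
  have hlim_succ := hlim.comp (tendsto_add_atTop_nat 1)
  have hlim_double := hlim.comp (tendsto_id.const_mul_atTop' two_pos)
  refine tendsto_of_tendsto_of_tendsto_of_le_of_le'
    (g := fun n => 2 * (f (2 * n) / (2 * n : ℕ)) - f n / n)
    (h := fun n => f (n + 1) / (n + 1 : ℕ) - f 0 / (n + 1 : ℕ)) ?_ ?_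
    ((eventually_ge_atTop 1).mono lower) (Eventually.of_forall upper)
  · simpa [two_mul] using (hlim_double.const_mul 2).sub hlim
  · simpa using hlim_succ.sub ((tendsto_const_div_atTop_nhds_zero_nat (f 0)).comp
      (tendsto_add_atTop_nat 1))

theorem Fin.init_cons {α : Type*} {n : ℕ} (a : α) (v : Fin (n + 1) → α) :
    Fin.init (Fin.cons a v : Fin (n + 2) → α) = Fin.cons a (Fin.init v) := by
  funext i
  refine Fin.cases rfl (fun j => ?_) i
  simp only [Fin.init, ← Fin.succ_castSucc, Fin.cons_succ]

section Cylinders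

variable {A : Type*}

def wordCylinder {L : ℕ} (w : Fin L → A) : Set (ℕ → A) := {x | ∀ i : Fin L, x i = w i}

theorem wordCylinder_eq_iUnion_snoc {L : ℕ} (w : Fin L → A) :
    wordCylinder w = ⋃ a, wordCylinder (Fin.snoc w a : Fin (L + 1) → A) := by
  ext x
  simp only [wordCylinder, Set.mem_iUnion, Set.mem_ofPred_eq]
  refine ⟨fun hx => ⟨x L, Fin.lastCases (by simp) fun j => by simpa using hx j⟩,
    fun ⟨a, ha⟩ i => by simpa using ha i.castSucc⟩

theorem preimage_shift_wordCylinder {L : ℕ} (w : Fin L → A) :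
    shift ⁻¹' wordCylinder w = ⋃ a, wordCylinder (Fin.cons a w : Fin (L + 1) → A) := by
  ext x
  simp only [wordCylinder, shift, Set.mem_preimage, Set.mem_iUnion, Set.mem_ofPred_eq]
  refine ⟨fun hx => ⟨x 0, Fin.cases (by simp) fun j => by simpa using hx j⟩,
    fun ⟨a, ha⟩ i => by simpa using ha i.succ⟩

variable [MeasurableSpace A]

theorem cylP_eq (μ : Measure (ℕ → A)) {L : ℕ} (w : Fin L → A) :
    cylP μ w = (μ (wordCylinder w)).toReal := rfl

theorem cylP_nonneg (μ : Measure (ℕ → A)) {L : ℕ} (w : Fin L → A) : 0 ≤ cylP μ w :=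
  ENNReal.toReal_nonneg

theorem measurableSet_wordCylinder [MeasurableSingletonClass A] {L : ℕ} (w : Fin L → A) :
    MeasurableSet (wordCylinder w) := by
  simp only [wordCylinder, Set.ofPred_forall]
  exact .iInter fun i => measurable_pi_apply _ (measurableSet_singleton _)

variable [Fintype A]

theorem toReal_measure_iUnion_wordCylinder [MeasurableSingletonClass A]
    (μ : Measure (ℕ → A)) [IsFiniteMeasure μ] {L : ℕ} (u : A → Fin L → A) (i : Fin L)
    (hu : ∀ a, u a i = a) :
    (μ (⋃ a, wordCylinder (u a))).toReal = ∑ a, cylP μ (u a) := by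
  have hdisj : Pairwise (Function.onFun Disjoint fun a => wordCylinder (u a)) := fun a b hab =>
    Set.disjoint_left.2 fun x hxa hxb => hab <| by rw [← hu a, ← hu b, ← hxa i, ← hxb i]
  rw [measure_iUnion hdisj fun a => measurableSet_wordCylinder _, tsum_fintype,
    ENNReal.toReal_sum fun a _ => measure_ne_top μ _]
  rfl

variable [MeasurableSingletonClass A] (μ : Measure (ℕ → A)) [IsFiniteMeasure μ]

theorem sum_cylP_snoc {L : ℕ} (w : Fin L → A) :
    ∑ a, cylP μ (Fin.snoc w a : Fin (L + 1) → A) = cylP μ w := by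
  rw [cylP_eq, wordCylinder_eq_iUnion_snoc,
    toReal_measure_iUnion_wordCylinder μ _ (Fin.last L) fun a => Fin.snoc_last _ _]

theorem sum_cylP_cons (hstat : MeasurePreserving shift μ μ) {L : ℕ} (w : Fin L → A) :
    ∑ a, cylP μ (Fin.cons a w : Fin (L + 1) → A) = cylP μ w := by
  rw [cylP_eq, ← hstat.measure_preimage (measurableSet_wordCylinder w).nullMeasurableSet,
    preimage_shift_wordCylinder,
    toReal_measure_iUnion_wordCylinder μ _ 0 fun a => Fin.cons_zero _ _]

theorem cylP_le_init {L : ℕ} (w : Fin (L + 1) → A) : cylP μ w ≤ cylP μ (Fin.init w) := by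
  calc cylP μ w = cylP μ (Fin.snoc (Fin.init w) (w (Fin.last L)) : Fin (L + 1) → A) := by
        rw [Fin.snoc_init_self]
    _ ≤ ∑ a, cylP μ (Fin.snoc (Fin.init w) a : Fin (L + 1) → A) :=
        Finset.single_le_sum (fun a _ => cylP_nonneg μ _) (Finset.mem_univ _)
    _ = cylP μ (Fin.init w) := sum_cylP_snoc μ _

theorem cylP_le_tail (hstat : MeasurePreserving shift μ μ) {L : ℕ} (w : Fin (L + 1) → A) :
    cylP μ w ≤ cylP μ (Fin.tail w) := by
  calc cylP μ w = cylP μ (Fin.cons (w 0) (Fin.tail w) : Fin (L + 1) → A) := by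
        rw [Fin.cons_self_tail]
    _ ≤ ∑ a, cylP μ (Fin.cons a (Fin.tail w) : Fin (L + 1) → A) :=
        Finset.single_le_sum (f := fun a => cylP μ (Fin.cons a (Fin.tail w) : Fin (L + 1) → A))
          (fun a _ => cylP_nonneg μ _) (Finset.mem_univ _)
    _ = cylP μ (Fin.tail w) := sum_cylP_cons μ hstat _

theorem sum_cylP_mul_init {L : ℕ} (g : (Fin L → A) → ℝ) :
    ∑ w : Fin (L + 1) → A, cylP μ w * g (Fin.init w) = ∑ u, cylP μ u * g u := by
  rw [← (Fin.snocEquiv fun _ => A).sum_comp, Fintype.sum_prod_type_right]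
  simp only [Fin.snocEquiv, Equiv.coe_fn_mk, Fin.init_snoc, ← Finset.sum_mul, sum_cylP_snoc]

theorem sum_cylP_mul_tail (hstat : MeasurePreserving shift μ μ) {L : ℕ} (g : (Fin L → A) → ℝ) :
    ∑ w : Fin (L + 1) → A, cylP μ w * g (Fin.tail w) = ∑ v, cylP μ v * g v := by
  rw [← (Fin.consEquiv fun _ => A).sum_comp, Fintype.sum_prod_type_right]
  simp only [Fin.consEquiv, Equiv.coe_fn_mk, Fin.tail_cons, ← Finset.sum_mul,
    sum_cylP_cons μ hstat]

end Cylinders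

section Entropy

variable {A : Type*} [MeasurableSpace A] [Fintype A] (μ : Measure (ℕ → A))

noncomputable def natH (L : ℕ) : ℝ := -∑ w : Fin L → A, cylP μ w * log (cylP μ w)

theorem blockH_eq_natH_div (L : ℕ) : blockH μ L = natH μ L / log 2 := by
  simp only [blockH, natH, logb, neg_div, Finset.sum_div, mul_div_assoc]

variable [IsProbabilityMeasure μ]

theorem blockH_zero : blockH μ 0 = 0 := by
  simp [blockH, cylP]

theorem sum_range_d2H_succ (n : ℕ) :
    ∑ L ∈ Finset.range (n + 1), d2H μ (L + 1) =
      blockH μ (n + 1) - blockH μ n - logb 2 (Fintype.card A) := by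
  induction n with
  | zero => simp [d2H, blockH_zero μ]
  | succ n ih =>
    rw [Finset.sum_range_succ, ih]
    simp only [d2H, Nat.add_eq_right, Nat.add_eq_zero_iff, one_ne_zero, and_false, ↓reduceIte,
      add_tsub_cancel_right, Nat.reduceSubDiff]
    ring

variable [MeasurableSingletonClass A]

theorem sum_cylP (L : ℕ) : ∑ w : Fin L → A, cylP μ w = 1 := by
  induction L with
  | zero => simp [cylP]
  | succ L ih => simpa [ih] using sum_cylP_mul_init μ (L := L) fun _ => 1

variable (hstat : MeasurePreserving shift μ μ)
include hstat

theorem sum_cylP_init_mul_tail_div (M : ℕ) :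
    ∑ w : Fin (M + 2) → A,
      cylP μ (Fin.init w) * cylP μ (Fin.tail w) / cylP μ (Fin.init (Fin.tail w)) = 1 := by
  rw [← (Fin.consEquiv fun _ => A).sum_comp, Fintype.sum_prod_type_right]
  simp only [Fin.consEquiv, Equiv.coe_fn_mk, Fin.tail_cons, Fin.init_cons, ← Finset.sum_div,
    ← Finset.sum_mul, sum_cylP_cons μ hstat]
  rw [← sum_cylP μ (M + 1)]
  refine Finset.sum_congr rfl fun v _ => mul_div_cancel_left_of_imp fun h => ?_
  exact le_antisymm (h ▸ cylP_le_init μ v) (cylP_nonneg μ v)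

theorem natH_add_two_add_le (M : ℕ) : natH μ (M + 2) + natH μ M ≤ 2 * natH μ (M + 1) := by
  have hsum := Finset.sum_le_sum (s := .univ) fun (w : Fin (M + 2) → A) _ =>
    Real.mul_log_ssa_le (cylP_nonneg μ w) (cylP_le_init μ w) (cylP_le_tail μ hstat w)
      (cylP_le_init μ (Fin.tail w))
  simp only [mul_add, mul_sub, Finset.sum_add_distrib, Finset.sum_sub_distrib] at hsum
  rw [sum_cylP_mul_init μ fun u => log (cylP μ u),
    sum_cylP_mul_tail μ hstat fun u => log (cylP μ u),
    sum_cylP_mul_tail μ hstat fun v => log (cylP μ (Fin.init v)),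
    sum_cylP_mul_init μ fun u => log (cylP μ u),
    sum_cylP_init_mul_tail_div μ hstat, sum_cylP] at hsum
  simp only [natH]
  linarith

theorem blockH_add_two_add_le (M : ℕ) :
    blockH μ (M + 2) + blockH μ M ≤ 2 * blockH μ (M + 1) := by
  simp only [blockH_eq_natH_div, ← add_div, mul_div_assoc']
  exact div_le_div_of_nonneg_right (natH_add_two_add_le μ hstat M) (log_pos one_lt_two).le

theorem antitone_blockH_succ_sub : Antitone fun n => blockH μ (n + 1) - blockH μ n :=
  antitone_nat_of_succ_le fun n => by linarith [blockH_add_two_add_le μ hstat n]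

end Entropy

theorem total_predictability_eq_neg_redundancy_general
    {A : Type*} [MeasurableSpace A] [MeasurableSingletonClass A] [Fintype A]
    (μ : Measure (ℕ → A)) [IsProbabilityMeasure μ]
    (hstat : MeasurePreserving (shift (A := A)) μ μ)
    (hμ : ℝ) (hrate : Tendsto (fun L : ℕ => blockH μ L / L) atTop (nhds hμ)) :
    Tendsto (fun N : ℕ => ∑ L ∈ Finset.range N, d2H μ (L + 1)) atTop
      (nhds (hμ - Real.logb 2 (Fintype.card A))) := by
  have hΔ := tendsto_sub_of_antitone_sub_of_tendsto_div (antitone_blockH_succ_sub μ hstat) hrate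
  refine (tendsto_add_atTop_iff_nat 1).1 ?_
  simpa only [sum_range_d2H_succ] using hΔ.sub_const (logb 2 (Fintype.card A))

/-- The total predictability `G = Σ_{L=1}^∞ Δ²H(L)` converges and equals
minus the redundancy: `G = h_μ - log₂|A|`. -/
theorem total_predictability_eq_neg_redundancy
    {A : Type*} [MeasurableSpace A] [MeasurableSingletonClass A] [Fintype A]
    (hA : 2 ≤ Fintype.card A)
    (μ : Measure (ℕ → A)) [IsProbabilityMeasure μ]
    (hstat : MeasurePreserving (shift (A := A)) μ μ)
    (hμ : ℝ) (hrate : Tendsto (fun L : ℕ => blockH μ L / L) atTop (nhds hμ)) :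
    Tendsto (fun N : ℕ => ∑ L ∈ Finset.range N, d2H μ (L + 1)) atTop
      (nhds (hμ - Real.logb 2 (Fintype.card A))) :=
  total_predictability_eq_neg_redundancy_general μ hstat hμ hrate
end

section
/- Suppose the excess entropy E = Σ_{L=1}^∞ [h_μ(L) - h_μ] converges. Then the excess entropy equals the limiting mutual information between the past and future halves of the process: lim_{L→∞} [2H(L) - H(2L)] = E, where by stationarity 2H(L) - H(2L) is the Shannon mutual information I[S₁…S_L ; S_{L+1}…S_{2L}] between the first L symbols and the following L symbols. -/
open MeasureTheory Real Filter

/-!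
Telescoping turns the partial sums of the excess entropy into `H(N) - N h_μ`, so convergence of
the series says `H(L) = L h_μ + E + o(1)`. Then
`2 H(L) - H(2L) = 2 (H(L) - L h_μ) - (H(2L) - 2L h_μ) → 2E - E = E`.
-/

theorem blockH_zero_s8 {A : Type*} [MeasurableSpace A] [Fintype A]
    (μ : Measure (ℕ → A)) [IsProbabilityMeasure μ] : blockH μ 0 = 0 := by
  simp [blockH, cylP]

theorem Finset.sum_range_succ_sub_sub_const {R : Type*} [Ring R] (f : ℕ → R) (c : R) (n : ℕ) :
    ∑ i ∈ Finset.range n, (f (i + 1) - f i - c) = f n - f 0 - n * c := by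
  rw [Finset.sum_sub_distrib, Finset.sum_range_sub, Finset.sum_const, Finset.card_range,
    nsmul_eq_mul]

theorem tendsto_two_mul_sub_comp_two_mul {R : Type*} [CommRing R] [TopologicalSpace R]
    [IsTopologicalRing R] {f : ℕ → R} {c E : R}
    (hf : Tendsto (fun n : ℕ => f n - n * c) atTop (nhds E)) :
    Tendsto (fun n : ℕ => 2 * f n - f (2 * n)) atTop (nhds E) := by
  have hf₂ : Tendsto (fun n : ℕ => f (2 * n) - (2 * n : ℕ) * c) atTop (nhds E) :=
    hf.comp (tendsto_id.const_mul_atTop' two_pos)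
  convert (hf.const_mul 2).sub hf₂ using 1
  · funext n
    push_cast
    ring
  · rw [two_mul, add_sub_cancel_right]

theorem excess_entropy_eq_past_future_mutual_information_general
    {A : Type*} [MeasurableSpace A] [Fintype A]
    (μ : Measure (ℕ → A)) [IsProbabilityMeasure μ]
    (hμ : ℝ)
    (E : ℝ)
    (hE : Tendsto (fun N : ℕ => ∑ L ∈ Finset.range N, (blockH μ (L + 1) - blockH μ L - hμ))
      atTop (nhds E)) :
    Tendsto (fun L : ℕ => 2 * blockH μ L - blockH μ (2 * L)) atTop (nhds E) := by
  have hlinear : Tendsto (fun N : ℕ => blockH μ N - N * hμ) atTop (nhds E) := by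
    simpa only [Finset.sum_range_succ_sub_sub_const, blockH_zero_s8, sub_zero] using hE
  exact tendsto_two_mul_sub_comp_two_mul hlinear

/-- If the excess entropy `E = Σ_{L=1}^∞ [h_μ(L) - h_μ]` converges, then it
equals the limiting mutual information between past and future halves:
`lim_{L→∞} [2H(L) - H(2L)] = E`. -/
theorem excess_entropy_eq_past_future_mutual_information
    {A : Type*} [MeasurableSpace A] [MeasurableSingletonClass A] [Fintype A]
    (hA : 2 ≤ Fintype.card A)
    (μ : Measure (ℕ → A)) [IsProbabilityMeasure μ]
    (hstat : MeasurePreserving (shift (A := A)) μ μ)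
    (hμ : ℝ) (hrate : Tendsto (fun L : ℕ => blockH μ L / L) atTop (nhds hμ))
    (E : ℝ)
    (hE : Tendsto (fun N : ℕ => ∑ L ∈ Finset.range N, (blockH μ (L + 1) - blockH μ L - hμ))
      atTop (nhds E)) :
    Tendsto (fun L : ℕ => 2 * blockH μ L - blockH μ (2 * L)) atTop (nhds E) :=
  excess_entropy_eq_past_future_mutual_information_general μ hμ E hE
end

section
/- For every even L ≥ 2, the gap between the two finite-L entropy-rate estimates is bounded below by the per-symbol block mutual information: H(L)/L - (H(L) - H(L-1)) ≥ (2H(L/2) - H(L)) / L. -/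
set_option linter.unusedSectionVars false

open MeasureTheory Real Filter

section aux
variable {A : Type*} [MeasurableSpace A] [MeasurableSingletonClass A] [Fintype A]

lemma cylSet_measurable {L : ℕ} (w : Fin L → A) :
    MeasurableSet {x : ℕ → A | ∀ i : Fin L, x i.1 = w i} := by
  have h : {x : ℕ → A | ∀ i : Fin L, x i.1 = w i}
      = ⋂ i : Fin L, (fun x : ℕ → A => x i.1) ⁻¹' {w i} := by
    ext x; simp [Set.mem_iInter]
  rw [h]
  exact MeasurableSet.iInter fun i => (measurable_pi_apply i.1) (measurableSet_singleton _)

variable (μ : Measure (ℕ → A)) [IsProbabilityMeasure μ]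

lemma cylP_snoc {L : ℕ} (u : Fin L → A) :
    cylP μ u = ∑ b : A, cylP μ (Fin.snoc u b) := by
  have hset : {x : ℕ → A | ∀ i : Fin L, x i.1 = u i}
      = ⋃ b : A, {x : ℕ → A | ∀ i : Fin (L+1), x i.1 = (Fin.snoc u b : Fin (L+1) → A) i} := by
    ext x
    simp only [Set.mem_setOf_eq, Set.mem_iUnion]
    constructor
    · intro h
      refine ⟨x L, fun i => ?_⟩
      refine Fin.lastCases ?_ ?_ i
      · simp [Fin.snoc_last]
      · intro j
        simpa [Fin.snoc_castSucc] using h j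
    · rintro ⟨b, h⟩ i
      simpa [Fin.snoc_castSucc] using h i.castSucc
  have hdisj : Pairwise (Function.onFun Disjoint
      fun b : A => {x : ℕ → A | ∀ i : Fin (L+1), x i.1 = (Fin.snoc u b : Fin (L+1) → A) i}) := by
    intro b b' hbb'
    rw [Function.onFun, Set.disjoint_left]
    intro x hx hx'
    apply hbb'
    have h1 := hx (Fin.last L)
    have h2 := hx' (Fin.last L)
    simp only [Fin.snoc_last] at h1 h2
    rw [← h1, ← h2]
  unfold cylP
  rw [hset, measure_iUnion hdisj (fun b => cylSet_measurable _), tsum_fintype,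
    ENNReal.toReal_sum (fun b _ => measure_ne_top μ _)]

lemma cylP_cons (hstat : MeasurePreserving (shift (A := A)) μ μ) {L : ℕ} (u : Fin L → A) :
    cylP μ u = ∑ a : A, cylP μ (Fin.cons a u) := by
  have hpre : shift (A := A) ⁻¹' {x : ℕ → A | ∀ i : Fin L, x i.1 = u i}
      = ⋃ a : A, {x : ℕ → A | ∀ i : Fin (L+1), x i.1 = (Fin.cons a u : Fin (L+1) → A) i} := by
    ext x
    simp only [Set.mem_preimage, Set.mem_setOf_eq, Set.mem_iUnion, shift]
    constructor
    · intro h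
      refine ⟨x 0, fun i => ?_⟩
      refine Fin.cases ?_ ?_ i
      · simp
      · intro j
        simpa [Fin.cons_succ] using h j
    · rintro ⟨a, h⟩ i
      simpa [Fin.cons_succ] using h i.succ
  have hdisj : Pairwise (Function.onFun Disjoint
      fun a : A => {x : ℕ → A | ∀ i : Fin (L+1), x i.1 = (Fin.cons a u : Fin (L+1) → A) i}) := by
    intro a a' haa'
    rw [Function.onFun, Set.disjoint_left]
    intro x hx hx'
    apply haa'
    have h1 := hx 0
    have h2 := hx' 0
    simp only [Fin.cons_zero] at h1 h2
    rw [← h1, ← h2]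
  have key : μ {x : ℕ → A | ∀ i : Fin L, x i.1 = u i}
      = μ (⋃ a : A, {x : ℕ → A | ∀ i : Fin (L+1), x i.1 = (Fin.cons a u : Fin (L+1) → A) i}) := by
    rw [← hpre, hstat.measure_preimage (cylSet_measurable u).nullMeasurableSet]
  unfold cylP
  rw [key, measure_iUnion hdisj (fun a => cylSet_measurable _), tsum_fintype,
    ENNReal.toReal_sum (fun a _ => measure_ne_top μ _)]

lemma sum_cons_eq {k : ℕ} (f : (Fin (k+1) → A) → ℝ) :
    ∑ w : Fin (k+1) → A, f w = ∑ a : A, ∑ u : Fin k → A, f (Fin.cons a u) := by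
  calc ∑ w : Fin (k+1) → A, f w
      = ∑ p : A × (Fin k → A), f (Fin.cons p.1 p.2) :=
        (Fintype.sum_equiv (Fin.consEquiv fun _ => A) (fun p => f (Fin.cons p.1 p.2)) f
          (fun p => rfl)).symm
    _ = ∑ a : A, ∑ u : Fin k → A, f (Fin.cons a u) := Fintype.sum_prod_type _

lemma sum_snoc_eq {k : ℕ} (f : (Fin (k+1) → A) → ℝ) :
    ∑ w : Fin (k+1) → A, f w = ∑ u : Fin k → A, ∑ b : A, f (Fin.snoc u b) := by
  calc ∑ w : Fin (k+1) → A, f w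
      = ∑ p : A × (Fin k → A), f (Fin.snoc p.2 p.1) :=
        (Fintype.sum_equiv (Fin.snocEquiv fun _ => A) (fun p => f (Fin.snoc p.2 p.1)) f
          (fun p => rfl)).symm
    _ = ∑ b : A, ∑ u : Fin k → A, f (Fin.snoc u b) := Fintype.sum_prod_type _
    _ = ∑ u : Fin k → A, ∑ b : A, f (Fin.snoc u b) := Finset.sum_comm

end aux


lemma ssa_core {α β γ : Type*} [Fintype α] [Fintype β] [Fintype γ]
    (p : α → β → γ → ℝ) (hp : ∀ a v b, 0 ≤ p a v b) :
    ∑ a : α, ∑ v : β, ∑ b : γ, p a v b *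
      (Real.log (∑ b' : γ, p a v b') + Real.log (∑ a' : α, p a' v b)
        - Real.log (p a v b) - Real.log (∑ a' : α, ∑ b' : γ, p a' v b')) ≤ 0 := by
  set P : α → β → ℝ := fun a v => ∑ b' : γ, p a v b' with hP
  set S : β → γ → ℝ := fun v b => ∑ a' : α, p a' v b with hS
  set m : β → ℝ := fun v => ∑ a' : α, ∑ b' : γ, p a' v b' with hm
  have hPnn : ∀ a v, 0 ≤ P a v := fun a v => Finset.sum_nonneg fun _ _ => hp _ _ _
  have hSnn : ∀ v b, 0 ≤ S v b := fun v b => Finset.sum_nonneg fun _ _ => hp _ _ _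
  have hmnn : ∀ v, 0 ≤ m v := fun v => Finset.sum_nonneg fun _ _ => hPnn _ _
  have hple : ∀ a v b, p a v b ≤ P a v := fun a v b =>
    Finset.single_le_sum (f := fun b' => p a v b') (fun _ _ => hp _ _ _) (Finset.mem_univ b)
  have hsle : ∀ a v b, p a v b ≤ S v b := fun a v b =>
    Finset.single_le_sum (f := fun a' => p a' v b) (fun _ _ => hp _ _ _) (Finset.mem_univ a)
  have hPm : ∀ a v, P a v ≤ m v := fun a v =>
    Finset.single_le_sum (f := fun a' => P a' v) (fun _ _ => hPnn _ _) (Finset.mem_univ a)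
  -- termwise bound
  have step1 : ∀ a v b, p a v b * (log (P a v) + log (S v b) - log (p a v b) - log (m v))
      ≤ (if 0 < p a v b then P a v * S v b / m v else 0)
        - (if 0 < p a v b then p a v b else 0) := by
    intro a v b
    by_cases h : 0 < p a v b
    · simp only [if_pos h]
      have hPp : 0 < P a v := lt_of_lt_of_le h (hple a v b)
      have hSp : 0 < S v b := lt_of_lt_of_le h (hsle a v b)
      have hmp : 0 < m v := lt_of_lt_of_le hPp (hPm a v)
      have hlog : log (P a v) + log (S v b) - log (p a v b) - log (m v)
          = log (P a v * S v b / (p a v b * m v)) := by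
        rw [Real.log_div (by positivity) (by positivity),
          Real.log_mul (ne_of_gt hPp) (ne_of_gt hSp),
          Real.log_mul (ne_of_gt h) (ne_of_gt hmp)]
        ring
      rw [hlog]
      have hx : 0 < P a v * S v b / (p a v b * m v) := by positivity
      have h1 := Real.log_le_sub_one_of_pos hx
      have h2 : p a v b * log (P a v * S v b / (p a v b * m v))
          ≤ p a v b * (P a v * S v b / (p a v b * m v) - 1) :=
        mul_le_mul_of_nonneg_left h1 (le_of_lt h)
      have h3 : p a v b * (P a v * S v b / (p a v b * m v) - 1)
          = P a v * S v b / m v - p a v b := by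
        field_simp
      linarith
    · have h0 : p a v b = 0 := le_antisymm (not_lt.1 h) (hp a v b)
      simp [if_neg h, h0]
  have hsum1 : ∑ a : α, ∑ v : β, ∑ b : γ,
      p a v b * (log (P a v) + log (S v b) - log (p a v b) - log (m v))
      ≤ ∑ a : α, ∑ v : β, ∑ b : γ,
        ((if 0 < p a v b then P a v * S v b / m v else 0)
          - (if 0 < p a v b then p a v b else 0)) :=
    Finset.sum_le_sum fun a _ => Finset.sum_le_sum fun v _ => Finset.sum_le_sum fun b _ =>
      step1 a v b
  have hif_p : ∀ a v b, (if 0 < p a v b then p a v b else 0) = p a v b := by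
    intro a v b
    by_cases h : 0 < p a v b
    · simp [h]
    · simp [h, le_antisymm (not_lt.1 h) (hp a v b)]
  have hsum2 : ∑ a : α, ∑ v : β, ∑ b : γ, (if 0 < p a v b then P a v * S v b / m v else 0)
      ≤ ∑ a : α, ∑ v : β, ∑ b : γ, (if 0 < m v then P a v * S v b / m v else 0) := by
    refine Finset.sum_le_sum fun a _ => Finset.sum_le_sum fun v _ =>
      Finset.sum_le_sum fun b _ => ?_
    by_cases h : 0 < p a v b
    · have hmp : 0 < m v := lt_of_lt_of_le h (le_trans (hple a v b) (hPm a v))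
      simp [h, hmp]
    · simp only [if_neg h]
      by_cases hmv : 0 < m v
      · rw [if_pos hmv]
        exact div_nonneg (mul_nonneg (hPnn a v) (hSnn v b)) (hmnn v)
      · rw [if_neg hmv]
  have hsum3 : ∑ a : α, ∑ v : β, ∑ b : γ, (if 0 < m v then P a v * S v b / m v else 0)
      = ∑ v : β, (if 0 < m v then m v else 0) := by
    rw [Finset.sum_comm]
    refine Finset.sum_congr rfl fun v _ => ?_
    by_cases hmv : 0 < m v
    · simp only [if_pos hmv]
      have e1 : ∀ a : α, ∑ b : γ, P a v * S v b / m v = P a v * (∑ b : γ, S v b) / m v := by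
        intro a
        rw [Finset.mul_sum, Finset.sum_div]
      rw [Finset.sum_congr rfl (fun a _ => e1 a), ← Finset.sum_div, ← Finset.sum_mul]
      have e2 : ∑ a : α, P a v = m v := rfl
      have e3 : ∑ b : γ, S v b = m v := by
        rw [hm, hS]
        exact Finset.sum_comm
      rw [e2, e3, mul_div_assoc, div_self (ne_of_gt hmv), mul_one]
    · simp only [if_neg hmv]
      simp
  have hsum4 : ∑ v : β, (if 0 < m v then m v else 0) ≤ ∑ v : β, m v :=
    Finset.sum_le_sum fun v _ => by
      by_cases hmv : 0 < m v
      · simp [hmv]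
      · simp [hmv, hmnn v]
  have hsum5 : ∑ v : β, m v = ∑ a : α, ∑ v : β, ∑ b : γ, p a v b := Finset.sum_comm
  have hexp : ∑ a : α, ∑ v : β, ∑ b : γ,
      ((if 0 < p a v b then P a v * S v b / m v else 0)
        - (if 0 < p a v b then p a v b else 0))
      = (∑ a : α, ∑ v : β, ∑ b : γ, (if 0 < p a v b then P a v * S v b / m v else 0))
        - (∑ a : α, ∑ v : β, ∑ b : γ, p a v b) := by
    simp only [Finset.sum_sub_distrib, hif_p]
  calc ∑ a : α, ∑ v : β, ∑ b : γ,
      p a v b * (log (P a v) + log (S v b) - log (p a v b) - log (m v))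
      ≤ (∑ a : α, ∑ v : β, ∑ b : γ, (if 0 < p a v b then P a v * S v b / m v else 0))
        - (∑ a : α, ∑ v : β, ∑ b : γ, p a v b) := by rw [← hexp]; exact hsum1
    _ ≤ 0 := by
        have := le_trans hsum2 (le_of_eq hsum3)
        have := le_trans this hsum4
        rw [hsum5] at this
        linarith


section concav
variable {A : Type*} [MeasurableSpace A] [MeasurableSingletonClass A] [Fintype A]
variable (μ : Measure (ℕ → A)) [IsProbabilityMeasure μ]

lemma blockH_concave (hstat : MeasurePreserving (shift (A := A)) μ μ) (n : ℕ) :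
    blockH μ (n+1+1) + blockH μ n ≤ 2 * blockH μ (n+1) := by
  set c : ℝ := Real.log 2 with hc
  have hcpos : 0 < c := Real.log_pos (by norm_num)
  set p : A → (Fin n → A) → A → ℝ := fun a v b => cylP μ (Fin.cons a (Fin.snoc v b)) with hpdef
  have hp : ∀ a v b, 0 ≤ p a v b := fun a v b => ENNReal.toReal_nonneg
  have hPeq : ∀ (a : A) (v : Fin n → A), cylP μ (Fin.cons a v) = ∑ b : A, p a v b := by
    intro a v
    rw [cylP_snoc μ (Fin.cons a v)]
    refine Finset.sum_congr rfl fun b _ => ?_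
    rw [← Fin.cons_snoc_eq_snoc_cons]
  have hSeq : ∀ (v : Fin n → A) (b : A), cylP μ (Fin.snoc v b) = ∑ a : A, p a v b :=
    fun v b => cylP_cons μ hstat _
  have hmeq : ∀ v : Fin n → A, cylP μ v = ∑ a : A, ∑ b : A, p a v b := by
    intro v
    rw [cylP_snoc μ v, Finset.sum_congr rfl fun b _ => hSeq v b]
    exact Finset.sum_comm
  -- abbreviations for the four log-sums
  set Sp : ℝ := ∑ a : A, ∑ v : Fin n → A, ∑ b : A, p a v b * Real.log (p a v b) with hSp
  set S1 : ℝ := ∑ a : A, ∑ v : Fin n → A,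
    (∑ b : A, p a v b) * Real.log (∑ b : A, p a v b) with hS1
  set S2 : ℝ := ∑ v : Fin n → A, ∑ b : A,
    (∑ a : A, p a v b) * Real.log (∑ a : A, p a v b) with hS2
  set Sm : ℝ := ∑ v : Fin n → A,
    (∑ a : A, ∑ b : A, p a v b) * Real.log (∑ a : A, ∑ b : A, p a v b) with hSm
  -- the key inequality
  have key := ssa_core p hp
  simp only [mul_add, mul_sub, Finset.sum_add_distrib, Finset.sum_sub_distrib] at key
  have r1 : (∑ a : A, ∑ v : Fin n → A, ∑ b : A, p a v b * Real.log (∑ b' : A, p a v b')) = S1 := by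
    refine Finset.sum_congr rfl fun a _ => Finset.sum_congr rfl fun v _ => ?_
    rw [← Finset.sum_mul]
  have r2 : (∑ a : A, ∑ v : Fin n → A, ∑ b : A, p a v b * Real.log (∑ a' : A, p a' v b)) = S2 := by
    rw [Finset.sum_comm]
    refine Finset.sum_congr rfl fun v _ => ?_
    rw [Finset.sum_comm]
    refine Finset.sum_congr rfl fun b _ => ?_
    rw [← Finset.sum_mul]
  have r4 : (∑ a : A, ∑ v : Fin n → A, ∑ b : A,
      p a v b * Real.log (∑ a' : A, ∑ b' : A, p a' v b')) = Sm := by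
    rw [Finset.sum_comm]
    refine Finset.sum_congr rfl fun v _ => ?_
    have h4 : ∀ a : A, (∑ b : A, p a v b * Real.log (∑ a' : A, ∑ b' : A, p a' v b'))
        = (∑ b : A, p a v b) * Real.log (∑ a' : A, ∑ b' : A, p a' v b') := fun a =>
      (Finset.sum_mul _ _ _).symm
    rw [Finset.sum_congr rfl fun a _ => h4 a, ← Finset.sum_mul]
  rw [r1, r2, r4] at key
  have keylog : S1 + S2 ≤ Sp + Sm := by rw [hSp]; linarith
  -- entropy identities
  have e2 : blockH μ (n+1+1) = -(Sp / c) := by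
    unfold blockH
    rw [sum_cons_eq (fun w => cylP μ w * Real.logb 2 (cylP μ w))]
    have : ∀ a : A, (∑ u : Fin (n+1) → A,
        cylP μ (Fin.cons a u) * Real.logb 2 (cylP μ (Fin.cons a u)))
        = ∑ v : Fin n → A, ∑ b : A, p a v b * Real.logb 2 (p a v b) := by
      intro a
      rw [sum_snoc_eq (fun u => cylP μ (Fin.cons a u) * Real.logb 2 (cylP μ (Fin.cons a u)))]
    rw [Finset.sum_congr rfl fun a _ => this a, hSp]
    simp only [Real.logb, ← hc, ← mul_div_assoc, ← Finset.sum_div]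
  have e1a : blockH μ (n+1) = -(S1 / c) := by
    unfold blockH
    rw [sum_cons_eq (fun w => cylP μ w * Real.logb 2 (cylP μ w))]
    rw [Finset.sum_congr rfl fun a (_ : a ∈ Finset.univ) =>
      Finset.sum_congr rfl fun v (_ : v ∈ Finset.univ) => by rw [hPeq a v], hS1]
    simp only [Real.logb, ← hc, ← mul_div_assoc, ← Finset.sum_div]
  have e1b : blockH μ (n+1) = -(S2 / c) := by
    unfold blockH
    rw [sum_snoc_eq (fun w => cylP μ w * Real.logb 2 (cylP μ w))]
    rw [Finset.sum_congr rfl fun v (_ : v ∈ Finset.univ) =>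
      Finset.sum_congr rfl fun b (_ : b ∈ Finset.univ) => by rw [hSeq v b], hS2]
    simp only [Real.logb, ← hc, ← mul_div_assoc, ← Finset.sum_div]
  have e0 : blockH μ n = -(Sm / c) := by
    unfold blockH
    rw [Finset.sum_congr rfl fun v (_ : v ∈ Finset.univ) => by rw [hmeq v], hSm]
    simp only [Real.logb, ← hc, ← mul_div_assoc, ← Finset.sum_div]
  have hdiv : (S1 + S2) / c ≤ (Sp + Sm) / c := by gcongr
  rw [add_div, add_div] at hdiv
  rw [e2, e0, two_mul]
  nth_rewrite 1 [e1a]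
  nth_rewrite 1 [e1b]
  linarith

end concav

/-- For every even `L ≥ 2` (written `L = 2M`, `M ≥ 1`), the gap between
the two finite-`L` entropy-rate estimates is bounded below by the per-symbol block
mutual information: `H(L)/L - (H(L) - H(L-1)) ≥ (2H(L/2) - H(L))/L`. -/
theorem entropy_rate_estimate_gap_lower_bound
    {A : Type*} [MeasurableSpace A] [MeasurableSingletonClass A] [Fintype A]
    (hA : 2 ≤ Fintype.card A)
    (μ : Measure (ℕ → A)) [IsProbabilityMeasure μ]
    (hstat : MeasurePreserving (shift (A := A)) μ μ)
    (M : ℕ) (hM : 1 ≤ M) :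
    blockH μ (2 * M) / (2 * M) - (blockH μ (2 * M) - blockH μ (2 * M - 1)) ≥
      (2 * blockH μ M - blockH μ (2 * M)) / (2 * M) := by
  set f : ℕ → ℝ := fun k => blockH μ (k+1) - blockH μ k with hf
  have hanti : Antitone f := antitone_nat_of_succ_le fun k => by
    have := blockH_concave μ hstat k
    simp only [hf]
    linarith
  have htel : ∀ j : ℕ, blockH μ (M + j) - blockH μ M = ∑ k ∈ Finset.range j, f (M + k) := by
    intro j
    induction j with
    | zero => simp
    | succ j ih =>
      rw [Finset.sum_range_succ, ← ih, hf]
      have h : M + (j+1) = (M + j) + 1 := by omega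
      rw [h]
      ring
  have hfe : f (2*M - 1) = blockH μ (2*M) - blockH μ (2*M - 1) := by
    rw [hf]
    have h : 2*M - 1 + 1 = 2*M := by omega
    simp only [h]
  have hbound : (M : ℝ) * (blockH μ (2*M) - blockH μ (2*M - 1)) ≤ blockH μ (2*M) - blockH μ M := by
    have h1 : blockH μ (2*M) - blockH μ M = ∑ k ∈ Finset.range M, f (M + k) := by
      have h := htel M
      rw [show M + M = 2*M by omega] at h
      exact h
    rw [h1, ← hfe]
    have h2 := Finset.card_nsmul_le_sum (Finset.range M) (fun k => f (M + k)) (f (2*M-1))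
      (fun k hk => hanti (by
        have := Finset.mem_range.mp hk
        omega))
    simpa [Finset.card_range, nsmul_eq_mul] using h2
  have hMpos : (0:ℝ) < (M:ℝ) := by exact_mod_cast hM
  have h2M : (0:ℝ) < 2 * (M:ℝ) := by linarith
  rw [ge_iff_le, div_le_iff₀ h2M, sub_mul, div_mul_cancel₀ _ (ne_of_gt h2M)]
  nlinarith [hbound]
end
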